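/- Let a₁₁, a₂₂, a₁₂, b₁, b₂ be nonnegative real numbers such that a₁₁·a₂₂ − a₁₂² = 0 and (a₁₁, a₂₂, a₁₂) ≠ (0, 0, 0), and let S = {(y₁, y₂, y₃) ∈ ℝ³ : a₁₁·y₁² + a₂₂·y₂² + 2·a₁₂·y₁·y₂ + 2·b₁·y₁ + 2·b₂·y₂ − y₃ = 0}. Then there exist an affine isometry φ of ℝ³ and a real p ≠ 0 such that φ(S) = {(z₁, z₂, z₃) ∈ ℝ³ : z₁² = 2·p·z₂}. -/

import Mathlib

/-!
Since `a₁₂ = √(a₁₁ a₂₂)`, the quadratic part is the perfect square `⟪s, y⟫²` with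
`s = (√a₁₁, √a₂₂, 0)`, so the surface is `⟪s, y⟫² + ⟪q, y⟫ = 0` with `q = (2b₁, 2b₂, -1)` not a
multiple of `s`. In an orthonormal frame whose first two vectors are `s / ‖s‖` and the normalized
component of `q` orthogonal to `s`, the equation reads `t₀² + α t₀ + β t₁ = 0` with `β ≠ 0`, and
completing the square and translating gives `z₀² = -β z₁`.
-/

open Module RealInnerProductSpace

def parabolicCylinder {ι : Type*} (i j : ι) (p : ℝ) : Set (EuclideanSpace ℝ ι) :=
  {z | z i ^ 2 = 2 * p * z j}

section

variable {E : Type*} [NormedAddCommGroup E] [InnerProductSpace ℝ E] [FiniteDimensional ℝ E]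
  {ι : Type*} [Fintype ι] [DecidableEq ι]

theorem exists_orthonormalBasis_apply_eq_of_orthonormal_pair (hcard : finrank ℝ E = Fintype.card ι)
    {i j : ι} (hij : i ≠ j) {e₀ e₁ : E} (he₀ : ‖e₀‖ = 1) (he₁ : ‖e₁‖ = 1) (h : ⟪e₀, e₁⟫ = 0) :
    ∃ b : OrthonormalBasis ι ℝ E, b i = e₀ ∧ b j = e₁ := by
  set v : ι → E := fun k => if k = i then e₀ else e₁
  have hv : Orthonormal ℝ (({i, j} : Set ι).domRestrict v) := by
    rw [orthonormal_iff_ite]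
    rintro ⟨k, hk⟩ ⟨l, hl⟩
    simp only [Set.mem_insert_iff, Set.mem_singleton_iff] at hk hl
    rcases hk with rfl | rfl <;> rcases hl with rfl | rfl <;>
      simp [v, hij, hij.symm, h, real_inner_comm e₀ e₁, he₀, he₁]
  obtain ⟨b, hb⟩ := hv.exists_orthonormalBasis_extension_of_card_eq hcard
  exact ⟨b, by simpa [v] using hb i (by simp), by simpa [v, hij.symm] using hb j (by simp)⟩

theorem exists_affineIsometryEquiv_image_eq_parabolicCylinder_of_orthonormal
    (hcard : finrank ℝ E = Fintype.card ι) {i j : ι} (hij : i ≠ j) {e₀ e₁ : E} (he₀ : ‖e₀‖ = 1)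
    (he₁ : ‖e₁‖ = 1) (h : ⟪e₀, e₁⟫ = 0) (α : ℝ) {β : ℝ} (hβ : β ≠ 0) :
    ∃ (φ : E ≃ᵃⁱ[ℝ] EuclideanSpace ℝ ι) (p : ℝ), p ≠ 0 ∧
      φ '' {y | ⟪e₀, y⟫ ^ 2 + α * ⟪e₀, y⟫ + β * ⟪e₁, y⟫ = 0} = parabolicCylinder i j p := by
  obtain ⟨b, hbi, hbj⟩ := exists_orthonormalBasis_apply_eq_of_orthonormal_pair hcard hij he₀ he₁ h
  let φ : E ≃ᵃⁱ[ℝ] EuclideanSpace ℝ ι := b.repr.toAffineIsometryEquiv.trans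
    (AffineIsometryEquiv.constVAdd ℝ _
      (EuclideanSpace.single i (α / 2) + EuclideanSpace.single j (-α ^ 2 / (4 * β))))
  refine ⟨φ, -β / 2, by simpa using hβ, ?_⟩
  have hφi (y : E) : φ y i = ⟪e₀, y⟫ + α / 2 := by
    simp [φ, hij, b.repr_apply_apply, hbi, add_comm]
  have hφj (y : E) : φ y j = ⟪e₁, y⟫ - α ^ 2 / (4 * β) := by
    simp [φ, hij.symm, b.repr_apply_apply, hbj, add_comm, sub_eq_add_neg, neg_div]
  have complete_square (t₀ t₁ : ℝ) :
      (t₀ + α / 2) ^ 2 - 2 * (-β / 2) * (t₁ - α ^ 2 / (4 * β)) = t₀ ^ 2 + α * t₀ + β * t₁ := by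
    field_simp
    ring
  rw [← φ.surjective.image_preimage (parabolicCylinder i j _)]
  congr 1
  ext y
  simp only [Set.mem_ofPred_eq, Set.mem_preimage, parabolicCylinder, hφi, hφj,
    ← sub_eq_zero (a := (_ + _) ^ 2), complete_square]

theorem exists_affineIsometryEquiv_image_eq_parabolicCylinder
    (hcard : finrank ℝ E = Fintype.card ι) {i j : ι} (hij : i ≠ j) {s q : E} (hs : s ≠ 0)
    (hq : q ∉ ℝ ∙ s) :
    ∃ (φ : E ≃ᵃⁱ[ℝ] EuclideanSpace ℝ ι) (p : ℝ), p ≠ 0 ∧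
      φ '' {y | ⟪s, y⟫ ^ 2 + ⟪q, y⟫ = 0} = parabolicCylinder i j p := by
  set r := q - (⟪s, q⟫ / ‖s‖ ^ 2) • s
  have hr : r ≠ 0 := fun h => hq (Submodule.mem_span_singleton.2 ⟨_, (sub_eq_zero.1 h).symm⟩)
  have hsn : ‖s‖ ≠ 0 := norm_ne_zero_iff.2 hs
  have hrn : ‖r‖ ≠ 0 := norm_ne_zero_iff.2 hr
  have hsr : ⟪s, r⟫ = 0 := by
    simp only [r, inner_sub_right, inner_smul_right, real_inner_self_eq_norm_sq]
    field_simp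
    ring
  obtain ⟨φ, p, hp, hφ⟩ := exists_affineIsometryEquiv_image_eq_parabolicCylinder_of_orthonormal
    hcard hij (e₀ := ‖s‖⁻¹ • s) (e₁ := ‖r‖⁻¹ • r) (by simp [norm_smul, hsn])
    (by simp [norm_smul, hrn])
    (by simp [inner_smul_left, inner_smul_right, hsr]) (⟪s, q⟫ / ‖s‖ ^ 3)
    (β := ‖r‖ / ‖s‖ ^ 2) (by positivity)
  refine ⟨φ, p, hp, ?_⟩
  rw [← hφ]
  congr 1
  ext y
  have hry : ⟪r, y⟫ = ⟪q, y⟫ - ⟪s, q⟫ / ‖s‖ ^ 2 * ⟪s, y⟫ := by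
    simp only [r, inner_sub_left, inner_smul_left, RCLike.conj_to_real]
  have frame_eq : ⟪‖s‖⁻¹ • s, y⟫ ^ 2 + ⟪s, q⟫ / ‖s‖ ^ 3 * ⟪‖s‖⁻¹ • s, y⟫
      + ‖r‖ / ‖s‖ ^ 2 * ⟪‖r‖⁻¹ • r, y⟫ = (⟪s, y⟫ ^ 2 + ⟪q, y⟫) / ‖s‖ ^ 2 := by
    simp only [inner_smul_left, hry, RCLike.conj_to_real]
    field_simp
    ring
  simp [frame_eq, hsn]

end

theorem quadratic_form_eq_sq_of_det_eq_zero {a₁₁ a₂₂ a₁₂ : ℝ} (h₁₁ : 0 ≤ a₁₁) (h₂₂ : 0 ≤ a₂₂)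
    (h₁₂ : 0 ≤ a₁₂) (hdet : a₁₁ * a₂₂ - a₁₂ ^ 2 = 0) (x y : ℝ) :
    a₁₁ * x ^ 2 + a₂₂ * y ^ 2 + 2 * a₁₂ * x * y = (√a₁₁ * x + √a₂₂ * y) ^ 2 := by
  have hsqrt : √a₁₁ * √a₂₂ = a₁₂ := by
    rw [← Real.sqrt_mul h₁₁, show a₁₁ * a₂₂ = a₁₂ ^ 2 by linarith, Real.sqrt_sq h₁₂]
  linear_combination -x ^ 2 * Real.sq_sqrt h₁₁ - y ^ 2 * Real.sq_sqrt h₂₂ - 2 * x * y * hsqrt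

theorem stmt_5_general (a₁₁ a₂₂ a₁₂ b₁ b₂ : ℝ)
    (h₁₁ : 0 ≤ a₁₁) (h₂₂ : 0 ≤ a₂₂) (h₁₂ : 0 ≤ a₁₂)
    (hdet : a₁₁ * a₂₂ - a₁₂ ^ 2 = 0)
    (hnz : ¬(a₁₁ = 0 ∧ a₂₂ = 0 ∧ a₁₂ = 0))
    (S : Set (EuclideanSpace ℝ (Fin 3)))
    (hS : S = {y : EuclideanSpace ℝ (Fin 3) |
      a₁₁ * (y 0) ^ 2 + a₂₂ * (y 1) ^ 2 + 2 * a₁₂ * (y 0) * (y 1)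
        + 2 * b₁ * (y 0) + 2 * b₂ * (y 1) - y 2 = 0}) :
    ∃ (φ : EuclideanSpace ℝ (Fin 3) ≃ᵃⁱ[ℝ] EuclideanSpace ℝ (Fin 3)) (p : ℝ),
      p ≠ 0 ∧ φ '' S = {z : EuclideanSpace ℝ (Fin 3) | (z 0) ^ 2 = 2 * p * z 1} := by
  set s : EuclideanSpace ℝ (Fin 3) := !₂[√a₁₁, √a₂₂, 0]
  set q : EuclideanSpace ℝ (Fin 3) := !₂[2 * b₁, 2 * b₂, -1]
  have hs : s ≠ 0 := by
    intro h
    have h₀ : √a₁₁ = 0 := congrArg (· 0) h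
    have h₁ : √a₂₂ = 0 := congrArg (· 1) h
    rw [Real.sqrt_eq_zero h₁₁] at h₀
    rw [Real.sqrt_eq_zero h₂₂] at h₁
    exact hnz ⟨h₀, h₁, by nlinarith⟩
  have hq : q ∉ ℝ ∙ s := by
    intro h
    obtain ⟨c, hc⟩ := Submodule.mem_span_singleton.1 h
    simpa [s, q] using congrArg (· 2) hc
  have hS' : S = {y | ⟪s, y⟫ ^ 2 + ⟪q, y⟫ = 0} := by
    rw [hS]
    ext y
    simp only [Set.mem_ofPred_eq, s, q, PiLp.inner_apply, Fin.sum_univ_three, RCLike.inner_apply,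
      Real.ringHom_apply, Matrix.cons_val_zero, Matrix.cons_val_one, Matrix.cons_val]
    rw [quadratic_form_eq_sq_of_det_eq_zero h₁₁ h₂₂ h₁₂ hdet]
    constructor <;> intro h <;> linarith
  obtain ⟨φ, p, hp, hφ⟩ := exists_affineIsometryEquiv_image_eq_parabolicCylinder
    (by simp) (show (0 : Fin 3) ≠ 1 by decide) hs hq
  exact ⟨φ, p, hp, hS' ▸ hφ⟩

/-- Case 3.2.2.B of **Proposition 3.2** (parabolic cylinder): if the quadratic part is nonzero
with vanishing determinant `a₁₁·a₂₂ − a₁₂² = 0`, then the surface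
`a₁₁y₁² + a₂₂y₂² + 2a₁₂y₁y₂ + 2b₁y₁ + 2b₂y₂ − y₃ = 0` is carried by an affine isometry of ℝ³
onto the canonical parabolic cylinder `z₁² = 2·p·z₂` with `p ≠ 0`. -/
theorem stmt_5 (a₁₁ a₂₂ a₁₂ b₁ b₂ : ℝ)
    (h₁₁ : 0 ≤ a₁₁) (h₂₂ : 0 ≤ a₂₂) (h₁₂ : 0 ≤ a₁₂) (hb₁ : 0 ≤ b₁) (hb₂ : 0 ≤ b₂)
    (hdet : a₁₁ * a₂₂ - a₁₂ ^ 2 = 0)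
    (hnz : ¬(a₁₁ = 0 ∧ a₂₂ = 0 ∧ a₁₂ = 0))
    (S : Set (EuclideanSpace ℝ (Fin 3)))
    (hS : S = {y : EuclideanSpace ℝ (Fin 3) |
      a₁₁ * (y 0) ^ 2 + a₂₂ * (y 1) ^ 2 + 2 * a₁₂ * (y 0) * (y 1)
        + 2 * b₁ * (y 0) + 2 * b₂ * (y 1) - y 2 = 0}) :
    ∃ (φ : EuclideanSpace ℝ (Fin 3) ≃ᵃⁱ[ℝ] EuclideanSpace ℝ (Fin 3)) (p : ℝ),
      p ≠ 0 ∧ φ '' S = {z : EuclideanSpace ℝ (Fin 3) | (z 0) ^ 2 = 2 * p * z 1} :=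
  stmt_5_general a₁₁ a₂₂ a₁₂ b₁ b₂ h₁₁ h₂₂ h₁₂ hdet hnz S hS
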